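/- arXiv:1205.2990 — 3 statements merged into one kernel-verified Lean document; each statement's English description precedes it below -/
import Mathlib

section
/- Each vector V_r = (x_{n+1}^r - x_n^r)·(Σ_{i=0}^{n} (∏_{j=i+1}^{n+1} A_j) 𝓩_i) + ∂/∂x_{n+1}^r, for r = 1,...,k+1, is orthogonal to every 𝓝_i, i = 0,...,n; i.e., V_r ∈ T_q𝓒. -/
/-!
Pairing with `𝓝_i` reads off the linearised constraint:
`⟪v, 𝓝_i⟫ = ⟪v_{i+1} - v_i, x_{i+1} - x_i⟫`.
Below the last slot, `V_r` is `c P_i (x_{i+1} - x_i)` with `c = x_{n+1}^r - x_n^r` and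
`P_i = ∏_{j>i} A_j`. For `i < n`, the unit length of `x_{i+1} - x_i` and the recursion
`P_i = A_{i+1} P_{i+1}` make the two slots cancel. For `i = n`, the last slot `∂/∂x_{n+1}^r`
contributes `x_{n+1}^r - x_n^r = c = c P_n`.
-/

open scoped RealInnerProductSpace

/-- The ambient space `(ℝ^{k+1})^{n+2}` with its product inner product. -/
abbrev Config (k n : ℕ) :=
  PiLp 2 fun _ : Fin (n + 2) => EuclideanSpace ℝ (Fin (k + 1))

/-- The vector `𝓩_i`, with component `x_{i+1} - x_i` in slot `i` and `0` elsewhere. -/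
noncomputable def Zvec (k n : ℕ) (i : Fin (n + 1)) (q : Config k n) : Config k n :=
  (WithLp.equiv 2 _).symm fun m =>
    if m = i.castSucc then q i.succ - q i.castSucc else 0

/-- The `r`-th standard basis vector `∂/∂x_{n+1}^r` in the last slot. -/
noncomputable def Evec (k n : ℕ) (r : Fin (k + 1)) : Config k n :=
  (WithLp.equiv 2 _).symm fun m =>
    if m = Fin.last (n + 1) then EuclideanSpace.single r 1 else 0

/-- The vector `𝓝_i`, with component `-(x_{i+1} - x_i)` in slot `i`,
`(x_{i+1} - x_i)` in slot `i+1`, and `0` elsewhere. -/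
noncomputable def Nvec (k n : ℕ) (i : Fin (n + 1)) (q : Config k n) : Config k n :=
  (WithLp.equiv 2 _).symm fun m =>
    if m = i.castSucc then -(q i.succ - q i.castSucc)
    else if m = i.succ then q i.succ - q i.castSucc
    else 0

/-- `A_{j+1} = ⟨x_{j+2} - x_{j+1}, x_{j+1} - x_j⟩` (the paper's `A_j` for `j = 1,…,n`). -/
noncomputable def Aco (k n : ℕ) (j : Fin n) (q : Config k n) : ℝ :=
  ⟪q ⟨(j : ℕ) + 2, by have := j.isLt; omega⟩ -
      q ⟨(j : ℕ) + 1, by have := j.isLt; omega⟩,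
    q ⟨(j : ℕ) + 1, by have := j.isLt; omega⟩ -
      q ⟨(j : ℕ), by have := j.isLt; omega⟩⟫

/-- The product `∏_{j=i+1}^{n+1} A_j` (with `A_{n+1} = 1`), i.e. `∏_{j=i+1}^{n} A_j`. -/
noncomputable def coeff (k n : ℕ) (i : Fin (n + 1)) (q : Config k n) : ℝ :=
  ∏ j : Fin n, if (i : ℕ) ≤ (j : ℕ) then Aco k n j q else 1

/-- The generator `V_r = (x_{n+1}^r - x_n^r)·(Σ_i (∏_{j=i+1}^{n+1} A_j) 𝓩_i) + ∂/∂x_{n+1}^r`. -/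
noncomputable def Vvec (k n : ℕ) (r : Fin (k + 1)) (q : Config k n) : Config k n :=
  (q (Fin.last (n + 1)) r - q ⟨n, by omega⟩ r) •
      (∑ i : Fin (n + 1), coeff k n i q • Zvec k n i q) +
    Evec k n r

theorem PiLp.inner_single_right {𝕜 ι : Type*} [RCLike 𝕜] [Fintype ι] [DecidableEq ι]
    {E : ι → Type*} [∀ i, NormedAddCommGroup (E i)] [∀ i, InnerProductSpace 𝕜 (E i)]
    (v : PiLp 2 E) (i : ι) (a : E i) :
    inner 𝕜 v (PiLp.single 2 i a) = inner 𝕜 (v i) a := by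
  rw [PiLp.inner_apply, Finset.sum_eq_single i]
  · rw [PiLp.single_eq_same]
  · intro j _ hj
    rw [PiLp.single_eq_of_ne 2 hj, inner_zero_right]
  · simp

variable {k n : ℕ}

def edge (q : Config k n) (i : Fin (n + 1)) : EuclideanSpace ℝ (Fin (k + 1)) :=
  q i.succ - q i.castSucc

lemma edge_last_apply (q : Config k n) (r : Fin (k + 1)) :
    edge q (Fin.last n) r = q (Fin.last (n + 1)) r - q ⟨n, by omega⟩ r :=
  rfl

lemma Aco_eq_inner_edge (j : Fin n) (q : Config k n) :
    Aco k n j q = ⟪edge q j.succ, edge q j.castSucc⟫ :=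
  rfl

lemma Nvec_eq_single_sub_single (i : Fin (n + 1)) (q : Config k n) :
    Nvec k n i q = PiLp.single 2 i.succ (edge q i) - PiLp.single 2 i.castSucc (edge q i) := by
  ext m : 1
  rcases eq_or_ne m i.castSucc with rfl | hm
  · simp [Nvec, edge, Fin.castSucc_lt_succ.ne]
  · simp [Nvec, edge, hm, PiLp.single_apply]

lemma inner_Nvec (v : Config k n) (i : Fin (n + 1)) (q : Config k n) :
    ⟪v, Nvec k n i q⟫ = ⟪v i.succ - v i.castSucc, edge q i⟫ := by
  rw [Nvec_eq_single_sub_single, inner_sub_right, PiLp.inner_single_right, PiLp.inner_single_right, inner_sub_left]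

lemma Vvec_apply_castSucc (r : Fin (k + 1)) (q : Config k n) (m : Fin (n + 1)) :
    Vvec k n r q m.castSucc = (edge q (Fin.last n) r * coeff k n m q) • edge q m := by
  rw [edge_last_apply]
  simp [Vvec, Zvec, Evec, edge, Fin.castSucc_ne_last, mul_smul]

lemma Vvec_apply_last (r : Fin (k + 1)) (q : Config k n) :
    Vvec k n r q (Fin.last (n + 1)) = EuclideanSpace.single r 1 := by
  simp [Vvec, Zvec, Evec, (Fin.castSucc_lt_last _).ne']

lemma coeff_last (q : Config k n) : coeff k n (Fin.last n) q = 1 :=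
  Finset.prod_eq_one fun j _ => if_neg (by simp)

lemma coeff_castSucc (j : Fin n) (q : Config k n) :
    coeff k n j.castSucc q = Aco k n j q * coeff k n j.succ q := by
  rw [coeff, coeff, ← Finset.mul_prod_erase _ _ (Finset.mem_univ j),
    ← Finset.mul_prod_erase _ (fun x : Fin n => if (j.succ : ℕ) ≤ x then Aco k n x q else 1)
      (Finset.mem_univ j)]
  simp only [Fin.val_castSucc, Fin.val_succ, le_refl, if_true, Nat.not_succ_le_self, if_false, one_mul]
  refine congrArg _ (Finset.prod_congr rfl fun x hx => ?_)
  have hxj : (j : ℕ) ≠ x := Fin.val_ne_of_ne (Finset.ne_of_mem_erase hx).symm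
  grind

theorem stmt6_general (k n : ℕ) (q : Config k n)
    (hq : ∀ i : Fin (n + 1), ‖q i.succ - q i.castSucc‖ = 1) :
    ∀ (r : Fin (k + 1)) (i : Fin (n + 1)), ⟪Vvec k n r q, Nvec k n i q⟫ = 0 := by
  intro r i
  have hunit : ∀ j, ⟪edge q j, edge q j⟫ = 1 := by
    intro j
    rw [real_inner_self_eq_norm_sq, edge, hq j, one_pow]
  rw [inner_Nvec]
  induction i using Fin.lastCases with
  | last =>
    rw [Fin.succ_last, Vvec_apply_last, Vvec_apply_castSucc, coeff_last, inner_sub_left,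
      real_inner_smul_left, hunit, EuclideanSpace.inner_single_left]
    simp
  | cast j =>
    rw [Fin.succ_castSucc, Vvec_apply_castSucc, Vvec_apply_castSucc, inner_sub_left,
      real_inner_smul_left, real_inner_smul_left, hunit, ← Aco_eq_inner_edge, coeff_castSucc]
    ring

/-- Each `V_r` is orthogonal to every `𝓝_i`, i.e. `V_r ∈ T_q𝓒`. -/
theorem stmt6 (k n : ℕ) (hk : 1 ≤ k) (hn : 1 ≤ n) (q : Config k n)
    (hq : ∀ i : Fin (n + 1), ‖q i.succ - q i.castSucc‖ = 1) :
    ∀ (r : Fin (k + 1)) (i : Fin (n + 1)), ⟪Vvec k n r q, Nvec k n i q⟫ = 0 :=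
  stmt6_general k n q hq
end

section
/- Suppose a curve γ(t) = (x_0(t),...,x_{n+1}(t)) in 𝓒 satisfies the kinematic constraints ẋ_{i-1} = v_{i-1}(t)·(x_i - x_{i-1}) for i = 1,...,n+1 and ‖x_i - x_{i-1}‖ ≡ 1. Then the tangential velocities satisfy v_{i-1} = v_i·⟨x_{i+1} - x_i, x_i - x_{i-1}⟩ for i = 1,...,n, and consequently v_i = v_n·∏_{j=i+1}^{n} A_j where A_j = ⟨x_{j+1}-x_j, x_j-x_{j-1}⟩. -/
open scoped RealInnerProductSpace

/-- If a differentiable curve `γ(t) = (x₀(t),…,x_{n+1}(t))` in `𝓒` satisfies the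
kinematic constraints `ẋ_{i-1} = v_{i-1}(x_i - x_{i-1})` and `‖x_i - x_{i-1}‖ ≡ 1`,
then `v_{i-1} = v_i ⟨x_{i+1} - x_i, x_i - x_{i-1}⟩` for `i = 1,…,n`, and consequently
`v_i = v_n ∏_{j=i+1}^{n} A_j` with `A_j = ⟨x_{j+1} - x_j, x_j - x_{j-1}⟩`. -/
theorem stmt15 (k n : ℕ) (hk : 1 ≤ k) (hn : 1 ≤ n)
    (x : ℝ → Fin (n + 2) → EuclideanSpace ℝ (Fin (k + 1)))
    (v : Fin (n + 1) → ℝ → ℝ)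
    (hdiff : ∀ i : Fin (n + 2), Differentiable ℝ fun t => x t i)
    (hlen : ∀ (t : ℝ) (i : Fin (n + 1)), ‖x t i.succ - x t i.castSucc‖ = 1)
    (hkin : ∀ (i : Fin (n + 1)) (t : ℝ),
      deriv (fun s => x s i.castSucc) t = v i t • (x t i.succ - x t i.castSucc)) :
    (∀ (i : Fin n) (t : ℝ),
        v i.castSucc t = v i.succ t *
          ⟪x t ⟨(i : ℕ) + 2, by have := i.isLt; omega⟩ -
              x t ⟨(i : ℕ) + 1, by have := i.isLt; omega⟩,
            x t ⟨(i : ℕ) + 1, by have := i.isLt; omega⟩ -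
              x t ⟨(i : ℕ), by have := i.isLt; omega⟩⟫) ∧
    ∀ (i : Fin (n + 1)) (t : ℝ),
      v i t = v (Fin.last n) t *
        ∏ j : Fin n,
          if (i : ℕ) ≤ (j : ℕ) then
            ⟪x t ⟨(j : ℕ) + 2, by have := j.isLt; omega⟩ -
                x t ⟨(j : ℕ) + 1, by have := j.isLt; omega⟩,
              x t ⟨(j : ℕ) + 1, by have := j.isLt; omega⟩ -
                x t ⟨(j : ℕ), by have := j.isLt; omega⟩⟫
          else 1 := by
  -- abbreviation for the inner products A_j
  set A : ℝ → Fin n → ℝ := fun t j =>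
    ⟪x t ⟨(j : ℕ) + 2, by have := j.isLt; omega⟩ -
        x t ⟨(j : ℕ) + 1, by have := j.isLt; omega⟩,
      x t ⟨(j : ℕ) + 1, by have := j.isLt; omega⟩ -
        x t ⟨(j : ℕ), by have := j.isLt; omega⟩⟫ with hA
  -- orthogonality of the derivative of each unit-length segment with itself
  have key : ∀ (i : Fin (n + 1)) (t : ℝ),
      ⟪deriv (fun s => x s i.succ) t - deriv (fun s => x s i.castSucc) t,
        x t i.succ - x t i.castSucc⟫ = 0 := by
    intro i t
    set u : ℝ → EuclideanSpace ℝ (Fin (k + 1)) := fun s => x s i.succ - x s i.castSucc with hu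
    set d : EuclideanSpace ℝ (Fin (k + 1)) :=
      deriv (fun s => x s i.succ) t - deriv (fun s => x s i.castSucc) t with hd
    have hu' : HasDerivAt u d t :=
      (((hdiff i.succ) t).hasDerivAt.sub ((hdiff i.castSucc) t).hasDerivAt)
    have hinner : HasDerivAt (fun s => ⟪u s, u s⟫) (⟪u t, d⟫ + ⟪d, u t⟫) t :=
      hu'.inner ℝ hu'
    have hconst : (fun s => ⟪u s, u s⟫) = fun _ => (1 : ℝ) := by
      funext s
      rw [real_inner_self_eq_norm_sq]
      simp [hu, hlen s i]
    rw [hconst] at hinner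
    have h0 : ⟪u t, d⟫ + ⟪d, u t⟫ = 0 := by
      have := (hasDerivAt_const t (1 : ℝ)).unique hinner
      linarith
    rw [real_inner_comm d (u t)] at h0
    show ⟪d, u t⟫ = 0
    linarith
  -- Part 1
  have part1 : ∀ (i : Fin n) (t : ℝ), v i.castSucc t = v i.succ t * A t i := by
    intro i t
    have hk1 := hkin i.castSucc t
    have hk2 := hkin i.succ t
    have hkey := key i.castSucc t
    have he1 : i.castSucc.succ = i.succ.castSucc := Fin.succ_castSucc i
    rw [he1] at hk1 hkey
    rw [hk1, hk2] at hkey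
    rw [inner_sub_left, real_inner_smul_left, real_inner_smul_left,
      real_inner_self_eq_norm_sq] at hkey
    have hl : ‖x t i.succ.castSucc - x t i.castSucc.castSucc‖ = 1 := by
      have := hlen t i.castSucc
      rwa [he1] at this
    rw [hl] at hkey
    have hA' : A t i = ⟪x t i.succ.succ - x t i.succ.castSucc,
        x t i.succ.castSucc - x t i.castSucc.castSucc⟫ := by
      have e2 : (⟨(i : ℕ) + 2, by have := i.isLt; omega⟩ : Fin (n + 2)) = i.succ.succ := by
        ext; simp
      have e1 : (⟨(i : ℕ) + 1, by have := i.isLt; omega⟩ : Fin (n + 2)) = i.succ.castSucc := by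
        ext; simp
      have e0 : (⟨(i : ℕ), by have := i.isLt; omega⟩ : Fin (n + 2)) = i.castSucc.castSucc := by
        ext; simp
      simp only [hA, e2, e1, e0]
    rw [hA']
    nlinarith [hkey]
  refine ⟨fun i t => part1 i t, ?_⟩
  -- Part 2, by reverse induction
  intro i
  induction i using Fin.reverseInduction with
  | last =>
    intro t
    have : ∀ j : Fin n, ¬ ((Fin.last n : ℕ) ≤ (j : ℕ)) := by
      intro j; simp only [Fin.val_last, not_le]; exact j.isLt
    simp only [this, if_false, Finset.prod_const_one, mul_one]
  | cast i ih =>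
    intro t
    have hsplit : (∏ j : Fin n, if ((i.castSucc : ℕ) ≤ (j : ℕ)) then A t j else 1)
        = A t i * ∏ j : Fin n, if ((i.succ : ℕ) ≤ (j : ℕ)) then A t j else 1 := by
      rw [← Finset.prod_filter, ← Finset.prod_filter]
      have hset : (Finset.univ.filter fun j : Fin n => ((i.castSucc : ℕ) ≤ (j : ℕ)))
          = insert i (Finset.univ.filter fun j : Fin n => ((i.succ : ℕ) ≤ (j : ℕ))) := by
        ext j
        simp only [Finset.mem_filter, Finset.mem_univ, true_and, Finset.mem_insert,
          Fin.coe_castSucc, Fin.val_succ, Fin.ext_iff]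
        omega
      rw [hset, Finset.prod_insert (by simp)]
    calc v i.castSucc t = v i.succ t * A t i := part1 i t
      _ = (v (Fin.last n) t * ∏ j : Fin n, if ((i.succ : ℕ) ≤ (j : ℕ)) then A t j else 1)
            * A t i := by rw [ih t]
      _ = v (Fin.last n) t * ∏ j : Fin n, if ((i.castSucc : ℕ) ≤ (j : ℕ)) then A t j else 1 := by
          rw [hsplit]; ring
end

section
/- For the system of a car with n trailers, the tangential velocity of trailer M_{n-r} satisfies v_r = v_n · ∏_{j=r+1}^{n} cos(θ_j − θ_{j-1}); equivalently, if a differentiable curve (m_0(t),...,m_n(t)) in ℂ^{n+1} satisfies m_r = m_{r-1} + e^{iθ_{r-1}}, ṁ_r = λ_r e^{iθ_r}, then λ_r = λ_{r+1} cos(θ_{r+1} − θ_r) for r = 0,...,n-1, and hence λ_r = λ_n ∏_{j=r+1}^n cos(θ_j − θ_{j-1}). -/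
lemma stmt19_key (a b d x y : ℝ)
    (h : (b : ℂ) * Complex.exp ((y:ℂ) * Complex.I)
        = (a : ℂ) * Complex.exp ((x:ℂ) * Complex.I) + ((d:ℂ) * Complex.I) * Complex.exp ((x:ℂ) * Complex.I)) :
    a = b * Real.cos (y - x) := by
  have hre := congrArg Complex.re h
  have him := congrArg Complex.im h
  simp [Complex.exp_mul_I, Complex.ext_iff, Complex.add_re,
    Complex.mul_re, Complex.mul_im, ← Complex.ofReal_cos, ← Complex.ofReal_sin] at hre him
  have h1 : b * (Real.cos y * Real.cos x + Real.sin y * Real.sin x)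
      = a * (Real.sin x ^ 2 + Real.cos x ^ 2) := by
    linear_combination Real.cos x * hre + Real.sin x * him
  rw [Real.sin_sq_add_cos_sq] at h1
  rw [Real.cos_sub]
  linarith

/-- Car with `n` trailers: if the trailer positions `m_r(t) ∈ ℂ` satisfy the geometric
constraints `m_r = m_{r-1} + e^{iθ_{r-1}}` and the kinematic constraints
`ṁ_r = λ_r e^{iθ_r}`, then `λ_r = λ_{r+1} cos(θ_{r+1} - θ_r)` for `r = 0,…,n-1`,
and hence `λ_r = λ_n ∏_{j=r+1}^{n} cos(θ_j - θ_{j-1})` (i.e. the tangential velocity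
of trailer `M_{n-r}` satisfies `v_r = v_n ∏_{j=r+1}^{n} cos(θ_j - θ_{j-1})`). -/
theorem stmt19 (n : ℕ) (hn : 1 ≤ n)
    (m : Fin (n + 1) → ℝ → ℂ) (θ lam : Fin (n + 1) → ℝ → ℝ)
    (hm : ∀ r, Differentiable ℝ (m r))
    (hθ : ∀ r, Differentiable ℝ (θ r))
    (hlam : ∀ r, Differentiable ℝ (lam r))
    (hgeo : ∀ (r : Fin n) (t : ℝ),
      m r.succ t = m r.castSucc t + Complex.exp ((θ r.castSucc t : ℂ) * Complex.I))
    (hkin : ∀ (r : Fin (n + 1)) (t : ℝ),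
      deriv (m r) t = (lam r t : ℂ) * Complex.exp ((θ r t : ℂ) * Complex.I)) :
    (∀ (r : Fin n) (t : ℝ),
        lam r.castSucc t = lam r.succ t * Real.cos (θ r.succ t - θ r.castSucc t)) ∧
    ∀ (r : Fin (n + 1)) (t : ℝ),
      lam r t = lam (Fin.last n) t *
        ∏ j : Fin n,
          if (r : ℕ) ≤ (j : ℕ) then Real.cos (θ j.succ t - θ j.castSucc t) else 1 := by
  have part1 : ∀ (r : Fin n) (t : ℝ),
      lam r.castSucc t = lam r.succ t * Real.cos (θ r.succ t - θ r.castSucc t) := by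
    intro r t
    have hexp : HasDerivAt (fun s => Complex.exp ((θ r.castSucc s : ℂ) * Complex.I))
        ((Complex.ofReal (deriv (θ r.castSucc) t) * Complex.I)
          * Complex.exp ((θ r.castSucc t : ℂ) * Complex.I)) t := by
      have h1 : HasDerivAt (θ r.castSucc) (deriv (θ r.castSucc) t) t :=
        ((hθ r.castSucc) t).hasDerivAt
      have h2 := (h1.ofReal_comp).mul_const Complex.I
      simpa [mul_comm] using h2.cexp
    have hms : HasDerivAt (m r.succ)
        (deriv (m r.castSucc) t + (Complex.ofReal (deriv (θ r.castSucc) t) * Complex.I)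
          * Complex.exp ((θ r.castSucc t : ℂ) * Complex.I)) t := by
      have hfun : m r.succ = fun s => m r.castSucc s
          + Complex.exp ((θ r.castSucc s : ℂ) * Complex.I) := funext (hgeo r)
      rw [hfun]
      exact ((hm r.castSucc t).hasDerivAt).add hexp
    have heq := hms.deriv
    rw [hkin r.succ t, hkin r.castSucc t] at heq
    exact stmt19_key (lam r.castSucc t) (lam r.succ t) (deriv (θ r.castSucc) t)
      (θ r.castSucc t) (θ r.succ t) heq
  refine ⟨part1, ?_⟩
  intro r
  induction r using Fin.reverseInduction with
  | last =>
    intro t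
    have h : ∀ j : Fin n, ¬ (n ≤ (j : ℕ)) := fun j => j.isLt.not_ge
    simp [h]
  | cast i ih =>
    intro t
    rw [part1 i t, ih t]
    set c : Fin n → ℝ := fun j => Real.cos (θ j.succ t - θ j.castSucc t) with hc
    have hsplit : ∀ j : Fin n, (if ((i.castSucc : Fin (n+1)) : ℕ) ≤ (j : ℕ) then c j else 1)
        = (if j = i then c j else 1) * (if ((i.succ : Fin (n+1)) : ℕ) ≤ (j : ℕ) then c j else 1) := by
      intro j
      rcases lt_trichotomy (j : ℕ) (i : ℕ) with h | h | h
      · rw [if_neg (by simp; omega), if_neg (by simp [Fin.ext_iff]; omega), if_neg (by simp; omega)]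
        ring
      · have hji : j = i := Fin.ext h
        subst hji
        rw [if_pos (by simp), if_pos rfl, if_neg (by simp)]
        ring
      · rw [if_pos (by simp; omega), if_neg (by simp [Fin.ext_iff]; omega), if_pos (by simp; omega)]
        ring
    rw [Finset.prod_congr rfl (fun j _ => hsplit j), Finset.prod_mul_distrib,
      Finset.prod_ite_eq' Finset.univ i c]
    simp only [Finset.mem_univ, if_pos]
    ring
end
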